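/- Let d ≥ 1 and m ≥ 1 be integers, let C : [0,1]^d → ℝ satisfy |C(u) − C(v)| ≤ Σ_{ℓ=1}^{d} |u_ℓ − v_ℓ| for all u, v ∈ [0,1]^d, and let f : [0,1]^d → ℝ be bounded. Then sup_{u ∈ [0,1]^d} |B_m f(u) − C(u)| ≤ sup_{v ∈ [0,1]^d} |f(v) − C(v)| + d/(2√m). -/

import Mathlib

/-- The Bernstein basis polynomial `P_{k,m}(u) = C(m,k) u^k (1-u)^(m-k)`. -/
noncomputable def bernsteinBasis (m k : ℕ) (u : ℝ) : ℝ :=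
  (m.choose k : ℝ) * u ^ k * (1 - u) ^ (m - k)

/-- The multivariate Bernstein polynomial of order `m` of `f : [0,1]^d → ℝ`. -/
noncomputable def bernsteinB (d m : ℕ) (f : (Fin d → ℝ) → ℝ) (u : Fin d → ℝ) : ℝ :=
  ∑ k : Fin d → Fin (m + 1),
    f (fun ℓ => ((k ℓ : ℕ) : ℝ) / m) * ∏ ℓ, bernsteinBasis m (k ℓ) (u ℓ)

/-!
`B_m f(u) − C(u) = Σ_k (f(k/m) − C(u)) w_k(u)`, where the product weights `w_k(u)` form the law of
a vector of independent `Binomial(m, u_ℓ)/m` coordinates. Splitting `f(k/m) − C(u)` through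
`C(k/m)` bounds each term by the supremum plus `Σ_ℓ |k_ℓ/m − u_ℓ|`. Each coordinate has mean
absolute deviation at most `√(u_ℓ(1 − u_ℓ)/m) ≤ 1/(2√m)`, by Cauchy–Schwarz and the binomial
variance.
-/

open Finset

theorem Fintype.sum_mul_prod_eq_of_sum_eq_one {R ι α : Type*} [CommSemiring R] [Fintype ι]
    [DecidableEq ι] [Fintype α] (p : ι → α → R) (g : α → R) (i : ι)
    (hp : ∀ j ≠ i, ∑ a, p j a = 1) :
    ∑ x : ι → α, g (x i) * ∏ j, p j (x j) = ∑ a, g a * p i a := by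
  set q : ι → α → R := fun j a => (if j = i then g a else 1) * p j a
  calc ∑ x : ι → α, g (x i) * ∏ j, p j (x j) = ∑ x : ι → α, ∏ j, q j (x j) := by
        simp only [q, prod_mul_distrib, prod_ite_eq']
    _ = ∏ j, ∑ a, q j a := (Fintype.prod_sum q).symm
    _ = ∑ a, q i a := prod_eq_single_of_mem i (mem_univ i) fun j _ hj => by simp [q, hj, hp j hj]
    _ = ∑ a, g a * p i a := by simp [q]

section bernsteinBasis

variable {m : ℕ} {u : ℝ}

lemma bernsteinBasis_eq_bernstein (m : ℕ) (k : Fin (m + 1)) (x : unitInterval) :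
    bernsteinBasis m k x = bernstein m k x := by
  rw [bernstein_apply, bernsteinBasis]

lemma bernsteinBasis_nonneg (k : ℕ) (hu : u ∈ Set.Icc (0 : ℝ) 1) :
    0 ≤ bernsteinBasis m k u := by
  have := hu.1
  have := sub_nonneg.2 hu.2
  unfold bernsteinBasis
  positivity

lemma sum_bernsteinBasis (hu : u ∈ Set.Icc (0 : ℝ) 1) :
    ∑ k : Fin (m + 1), bernsteinBasis m k u = 1 := by
  simpa only [bernsteinBasis_eq_bernstein m _ ⟨u, hu⟩] using bernstein.probability m ⟨u, hu⟩

lemma sum_sq_sub_mul_bernsteinBasis (hm : m ≠ 0) (hu : u ∈ Set.Icc (0 : ℝ) 1) :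
    ∑ k : Fin (m + 1), (u - ((k : ℕ) : ℝ) / m) ^ 2 * bernsteinBasis m k u = u * (1 - u) / m := by
  simpa only [bernsteinBasis_eq_bernstein m _ ⟨u, hu⟩, bernstein.z] using bernstein.variance hm ⟨u, hu⟩

lemma sum_abs_sub_mul_bernsteinBasis_le (hm : m ≠ 0) (hu : u ∈ Set.Icc (0 : ℝ) 1) :
    ∑ k : Fin (m + 1), |((k : ℕ) : ℝ) / m - u| * bernsteinBasis m k u ≤ 1 / (2 * √m) := by
  have hcs : (∑ k : Fin (m + 1), |((k : ℕ) : ℝ) / m - u| * bernsteinBasis m k u) ^ 2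
      ≤ u * (1 - u) / m :=
    calc _ ≤ (∑ k : Fin (m + 1), bernsteinBasis m k u) *
          ∑ k : Fin (m + 1), (u - ((k : ℕ) : ℝ) / m) ^ 2 * bernsteinBasis m k u :=
          sum_sq_le_sum_mul_sum_of_sq_le_mul _ (fun k _ => bernsteinBasis_nonneg k hu)
            (fun k _ => mul_nonneg (sq_nonneg _) (bernsteinBasis_nonneg k hu))
            fun k _ => by rw [mul_pow, sq_abs]; nlinarith
      _ = u * (1 - u) / m := by
          rw [sum_bernsteinBasis hu, sum_sq_sub_mul_bernsteinBasis hm hu, one_mul]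
  have hvar : u * (1 - u) / m ≤ (1 / (2 * √m)) ^ 2 := by
    have hm' : (0 : ℝ) < m := by positivity
    rw [div_pow, mul_pow, Real.sq_sqrt hm'.le, div_le_div_iff₀ hm' (mul_pos (by norm_num) hm')]
    nlinarith [sq_nonneg (2 * u - 1)]
  exact le_of_pow_le_pow_left₀ two_ne_zero (by positivity) (hcs.trans hvar)

end bernsteinBasis

section bernsteinWeight

variable {d m : ℕ} {u : Fin d → ℝ}

noncomputable def bernsteinWeight (m : ℕ) (u : Fin d → ℝ) (k : Fin d → Fin (m + 1)) : ℝ :=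
  ∏ ℓ, bernsteinBasis m (k ℓ) (u ℓ)

lemma bernsteinWeight_nonneg (hu : ∀ ℓ, u ℓ ∈ Set.Icc (0 : ℝ) 1) (k : Fin d → Fin (m + 1)) :
    0 ≤ bernsteinWeight m u k :=
  prod_nonneg fun ℓ _ => bernsteinBasis_nonneg _ (hu ℓ)

lemma sum_bernsteinWeight (hu : ∀ ℓ, u ℓ ∈ Set.Icc (0 : ℝ) 1) :
    ∑ k, bernsteinWeight m u k = 1 := by
  unfold bernsteinWeight
  rw [← Fintype.prod_sum fun ℓ (i : Fin (m + 1)) => bernsteinBasis m i (u ℓ)]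
  exact prod_eq_one fun ℓ _ => sum_bernsteinBasis (hu ℓ)

lemma sum_mul_bernsteinWeight_eq (hu : ∀ ℓ, u ℓ ∈ Set.Icc (0 : ℝ) 1) (g : Fin (m + 1) → ℝ)
    (ℓ : Fin d) :
    ∑ k, g (k ℓ) * bernsteinWeight m u k = ∑ i, g i * bernsteinBasis m i (u ℓ) :=
  Fintype.sum_mul_prod_eq_of_sum_eq_one (fun j (i : Fin (m + 1)) => bernsteinBasis m i (u j)) g ℓ
    fun j _ => sum_bernsteinBasis (hu j)

lemma sum_dist_mul_bernsteinWeight_le (hm : m ≠ 0) (hu : ∀ ℓ, u ℓ ∈ Set.Icc (0 : ℝ) 1) :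
    ∑ k, (∑ ℓ, |((k ℓ : ℕ) : ℝ) / m - u ℓ|) * bernsteinWeight m u k ≤ d / (2 * √m) :=
  calc ∑ k, (∑ ℓ, |((k ℓ : ℕ) : ℝ) / m - u ℓ|) * bernsteinWeight m u k
      = ∑ ℓ, ∑ i : Fin (m + 1), |((i : ℕ) : ℝ) / m - u ℓ| * bernsteinBasis m i (u ℓ) := by
        simp only [sum_mul]
        rw [sum_comm]
        exact sum_congr rfl fun ℓ _ =>
          sum_mul_bernsteinWeight_eq hu (fun i => |((i : ℕ) : ℝ) / m - u ℓ|) ℓ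
    _ ≤ ∑ _ℓ : Fin d, 1 / (2 * √m) :=
        sum_le_sum fun ℓ _ => sum_abs_sub_mul_bernsteinBasis_le hm (hu ℓ)
    _ = d / (2 * √m) := by simp [div_eq_mul_inv]

theorem abs_bernsteinB_sub_le (hm : m ≠ 0) (hu : ∀ ℓ, u ℓ ∈ Set.Icc (0 : ℝ) 1)
    {f : (Fin d → ℝ) → ℝ} {c S : ℝ}
    (hf : ∀ k : Fin d → Fin (m + 1),
      |f (fun ℓ => ((k ℓ : ℕ) : ℝ) / m) - c| ≤ S + ∑ ℓ, |((k ℓ : ℕ) : ℝ) / m - u ℓ|) :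
    |bernsteinB d m f u - c| ≤ S + d / (2 * √m) :=
  calc |bernsteinB d m f u - c|
      = |∑ k, (f (fun ℓ => ((k ℓ : ℕ) : ℝ) / m) - c) * bernsteinWeight m u k| := by
        simp only [sub_mul, sum_sub_distrib, ← mul_sum, sum_bernsteinWeight hu, mul_one]
        rfl
    _ ≤ ∑ k, |f (fun ℓ => ((k ℓ : ℕ) : ℝ) / m) - c| * bernsteinWeight m u k := by
        refine (abs_sum_le_sum_abs _ _).trans_eq (sum_congr rfl fun k _ => ?_)
        rw [abs_mul, abs_of_nonneg (bernsteinWeight_nonneg hu k)]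
    _ ≤ ∑ k, (S + ∑ ℓ, |((k ℓ : ℕ) : ℝ) / m - u ℓ|) * bernsteinWeight m u k :=
        sum_le_sum fun k _ => mul_le_mul_of_nonneg_right (hf k) (bernsteinWeight_nonneg hu k)
    _ = S + ∑ k, (∑ ℓ, |((k ℓ : ℕ) : ℝ) / m - u ℓ|) * bernsteinWeight m u k := by
        simp only [add_mul, sum_add_distrib, ← mul_sum, sum_bernsteinWeight hu, mul_one]
    _ ≤ S + d / (2 * √m) := add_le_add_right (sum_dist_mul_bernsteinWeight_le hm hu) S

end bernsteinWeight

lemma exists_abs_le_of_l1Lipschitz {d : ℕ} {C : (Fin d → ℝ) → ℝ}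
    (hLip : ∀ u v : Fin d → ℝ, (∀ ℓ, u ℓ ∈ Set.Icc (0 : ℝ) 1) →
      (∀ ℓ, v ℓ ∈ Set.Icc (0 : ℝ) 1) → |C u - C v| ≤ ∑ ℓ, |u ℓ - v ℓ|) :
    ∃ K, ∀ v : Fin d → ℝ, (∀ ℓ, v ℓ ∈ Set.Icc (0 : ℝ) 1) → |C v| ≤ K := by
  refine ⟨|C 0| + d, fun v hv => ?_⟩
  have hdist : ∑ ℓ, |v ℓ - 0| ≤ d :=
    calc ∑ ℓ, |v ℓ - 0| ≤ ∑ _ℓ : Fin d, (1 : ℝ) := sum_le_sum fun ℓ _ => by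
          rw [sub_zero, abs_of_nonneg (hv ℓ).1]
          exact (hv ℓ).2
      _ = d := by simp
  have hC := (hLip v 0 hv fun _ => Set.left_mem_Icc.2 zero_le_one).trans hdist
  linarith [abs_sub_abs_le_abs_sub (C v) (C 0)]

theorem bernstein_approx_le_sup_add_bias_general (d m : ℕ) (hm : 1 ≤ m)
    (C f : (Fin d → ℝ) → ℝ)
    (hLip : ∀ u v : Fin d → ℝ, (∀ ℓ, u ℓ ∈ Set.Icc (0 : ℝ) 1) →
      (∀ ℓ, v ℓ ∈ Set.Icc (0 : ℝ) 1) → |C u - C v| ≤ ∑ ℓ, |u ℓ - v ℓ|)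
    (hf : ∃ M : ℝ, ∀ v : Fin d → ℝ, (∀ ℓ, v ℓ ∈ Set.Icc (0 : ℝ) 1) → |f v| ≤ M) :
    ∀ u : Fin d → ℝ, (∀ ℓ, u ℓ ∈ Set.Icc (0 : ℝ) 1) →
      |bernsteinB d m f u - C u| ≤
        sSup {x : ℝ | ∃ v : Fin d → ℝ, (∀ ℓ, v ℓ ∈ Set.Icc (0 : ℝ) 1) ∧ x = |f v - C v|}
          + (d : ℝ) / (2 * Real.sqrt m) := by
  intro u hu
  obtain ⟨M, hM⟩ := hf
  obtain ⟨K, hK⟩ := exists_abs_le_of_l1Lipschitz hLip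
  refine abs_bernsteinB_sub_le (by omega) hu fun k => ?_
  have hk : ∀ ℓ, ((k ℓ : ℕ) : ℝ) / m ∈ Set.Icc (0 : ℝ) 1 := fun ℓ => (bernstein.z (k ℓ)).2
  refine (abs_sub_le _ _ _).trans
    (add_le_add (le_csSup ⟨M + K, ?_⟩ ⟨_, hk, rfl⟩) (hLip _ u hk hu))
  rintro _ ⟨v, hv, rfl⟩
  exact (abs_sub _ _).trans (add_le_add (hM v hv) (hK v hv))

/-- if `C : [0,1]^d → ℝ` is ℓ¹-Lipschitz and `f : [0,1]^d → ℝ` is bounded,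
then `sup_{u ∈ [0,1]^d} |B_m f(u) − C(u)| ≤ sup_{v ∈ [0,1]^d} |f(v) − C(v)| + d/(2√m)`. -/
theorem bernstein_approx_le_sup_add_bias (d m : ℕ) (hd : 1 ≤ d) (hm : 1 ≤ m)
    (C f : (Fin d → ℝ) → ℝ)
    (hLip : ∀ u v : Fin d → ℝ, (∀ ℓ, u ℓ ∈ Set.Icc (0 : ℝ) 1) →
      (∀ ℓ, v ℓ ∈ Set.Icc (0 : ℝ) 1) → |C u - C v| ≤ ∑ ℓ, |u ℓ - v ℓ|)
    (hf : ∃ M : ℝ, ∀ v : Fin d → ℝ, (∀ ℓ, v ℓ ∈ Set.Icc (0 : ℝ) 1) → |f v| ≤ M) :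
    ∀ u : Fin d → ℝ, (∀ ℓ, u ℓ ∈ Set.Icc (0 : ℝ) 1) →
      |bernsteinB d m f u - C u| ≤
        sSup {x : ℝ | ∃ v : Fin d → ℝ, (∀ ℓ, v ℓ ∈ Set.Icc (0 : ℝ) 1) ∧ x = |f v - C v|}
          + (d : ℝ) / (2 * Real.sqrt m) :=
  bernstein_approx_le_sup_add_bias_general d m hm C f hLip hf
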